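/- arXiv:2111.06130 — 5 statements merged into one kernel-verified Lean document; each statement's English description precedes it below -/
import Mathlib

section
/- For all 2<q<3, ε>0 and t≥0 one has h_ε(t)·t² − q·H_ε(t) ≥ 0; consequently (1/2)·h_ε(t)·t² − H_ε(t) ≥ ((q−2)/(2q))·h_ε(t)·t² for every t≥0. -/
noncomputable section

/-- `b_ε(t) = ϑ(ε t)`. -/
def bfun (ϑ : ℝ → ℝ) (ε t : ℝ) : ℝ := ϑ (ε * t)

/-- `m_ε(t) = ∫₀ᵗ b_ε(s) ds`. -/
def mfun (ϑ : ℝ → ℝ) (ε t : ℝ) : ℝ := ∫ s in (0:ℝ)..t, bfun ϑ ε s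

/-- The truncated nonlinearity `h_ε`, with `h_ε(0)=0`. -/
def hfun (ϑ : ℝ → ℝ) (q ε t : ℝ) : ℝ :=
  if 0 < t then
    t ^ (q - 2) + (q / 3) * t ^ (q - 2) * (mfun ϑ ε (t ^ 2)) ^ ((3 - q) / 2)
      + ((3 - q) / 3) * t ^ q * (mfun ϑ ε (t ^ 2)) ^ ((3 - q) / 2 - 1) * bfun ϑ ε (t ^ 2)
  else 0

/-- `H_ε(t) = t^q/q + (t^q/3)(m_ε(t²))^{(3−q)/2} ( = ∫₀ᵗ h_ε(s)·s ds )`. -/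
def Hfun (ϑ : ℝ → ℝ) (q ε t : ℝ) : ℝ :=
  t ^ q / q + (t ^ q / 3) * (mfun ϑ ε (t ^ 2)) ^ ((3 - q) / 2)

/-- the Ambrosetti–Rabinowitz-type inequality for `h_ε`, `H_ε`. -/
theorem stmt4 (ϑ : ℝ → ℝ)
    (hϑsmooth : ContDiff ℝ (⊤ : ℕ∞) ϑ)
    (hϑrange : ∀ t, 0 ≤ t → ϑ t ∈ Set.Icc (0:ℝ) 1)
    (hϑone : ∀ t, 0 ≤ t → t ≤ 1 → ϑ t = 1)
    (hϑzero : ∀ t, 2 ≤ t → ϑ t = 0)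
    (hϑmono : ∀ t, 0 ≤ t → deriv ϑ t ≤ 0)
    (q ε : ℝ) (hq2 : 2 < q) (hq3 : q < 3) (hε : 0 < ε)
    (t : ℝ) (ht : 0 ≤ t) :
    0 ≤ hfun ϑ q ε t * t ^ 2 - q * Hfun ϑ q ε t ∧
    ((q - 2) / (2 * q)) * (hfun ϑ q ε t * t ^ 2)
      ≤ (1 / 2) * hfun ϑ q ε t * t ^ 2 - Hfun ϑ q ε t := by
  have hq0 : (0:ℝ) < q := by linarith
  have key : 0 ≤ hfun ϑ q ε t * t ^ 2 - q * Hfun ϑ q ε t := by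
    rcases eq_or_lt_of_le ht with h0 | htpos
    · simp [hfun, Hfun, ← h0, Real.zero_rpow (ne_of_gt hq0)]
    · have hm : 0 ≤ mfun ϑ ε (t ^ 2) := by
        apply intervalIntegral.integral_nonneg (by positivity)
        intro s hs
        exact (hϑrange _ (mul_nonneg hε.le hs.1)).1
      have hb : 0 ≤ bfun ϑ ε (t ^ 2) := (hϑrange _ (by positivity)).1
      have hqq : t ^ (q - 2) * t ^ 2 = t ^ q := by
        rw [show (t:ℝ) ^ 2 = t ^ (2:ℝ) from (Real.rpow_two t).symm,
          ← Real.rpow_add htpos]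
        ring_nf
      simp only [hfun, if_pos htpos, Hfun]
      set m := mfun ϑ ε (t ^ 2)
      set b := bfun ϑ ε (t ^ 2)
      have heq : (t ^ (q - 2) + q / 3 * t ^ (q - 2) * m ^ ((3 - q) / 2)
            + (3 - q) / 3 * t ^ q * m ^ ((3 - q) / 2 - 1) * b) * t ^ 2
          - q * (t ^ q / q + t ^ q / 3 * m ^ ((3 - q) / 2))
          = (3 - q) / 3 * (t ^ q * t ^ 2) * m ^ ((3 - q) / 2 - 1) * b := by
        have hqne : q ≠ 0 := ne_of_gt hq0
        field_simp
        linear_combination (3 + q * m ^ ((3 - q) / 2)) * hqq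
      rw [heq]
      have : 0 ≤ m ^ ((3 - q) / 2 - 1) := Real.rpow_nonneg hm _
      have htq : 0 ≤ t ^ q := Real.rpow_nonneg ht _
      have h3q : 0 < 3 - q := by linarith
      positivity
  refine ⟨key, ?_⟩
  rw [div_mul_eq_mul_div, div_le_iff₀ (by positivity)]
  nlinarith [key]
end
end

section
/- For all 2<q<3, ε>0, x∈ℝ³ and t≥0 one has g_ε(x,t)·t² − 2·G_ε(x,t) ≥ 0, where g_ε(x,t)=min{h_ε(t), φ(x)} and G_ε(x,t)=∫₀ᵗ g_ε(x,s)·s ds. -/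
noncomputable section

/-- `φ(x) = 1/(1+|x|⁴)`. -/
def phi (x : EuclideanSpace ℝ (Fin 3)) : ℝ := 1 / (1 + ‖x‖ ^ 4)

/-- `g_ε(x,t) = min{h_ε(t), φ(x)}`. -/
def gfun (ϑ : ℝ → ℝ) (q ε : ℝ) (x : EuclideanSpace ℝ (Fin 3)) (t : ℝ) : ℝ :=
  min (hfun ϑ q ε t) (phi x)

/-- `G_ε(x,t) = ∫₀ᵗ g_ε(x,s)·s ds`. -/
def Gfun (ϑ : ℝ → ℝ) (q ε : ℝ) (x : EuclideanSpace ℝ (Fin 3)) (t : ℝ) : ℝ :=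
  ∫ s in (0:ℝ)..t, gfun ϑ q ε x s * s

open Set MeasureTheory intervalIntegral

lemma bfun_continuous {ϑ : ℝ → ℝ} (hϑc : Continuous ϑ) (ε : ℝ) :
    Continuous (bfun ϑ ε) := hϑc.comp (continuous_const.mul continuous_id)

lemma mfun_hasDerivAt {ϑ : ℝ → ℝ} (hϑc : Continuous ϑ) (ε u : ℝ) :
    HasDerivAt (mfun ϑ ε) (bfun ϑ ε u) u := by
  have hb := bfun_continuous hϑc ε
  exact intervalIntegral.integral_hasDerivAt_right (hb.intervalIntegrable _ _)
    (hb.stronglyMeasurableAtFilter _ _) hb.continuousAt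

lemma mfun_continuous {ϑ : ℝ → ℝ} (hϑc : Continuous ϑ) (ε : ℝ) :
    Continuous (mfun ϑ ε) :=
  continuous_iff_continuousAt.2 fun u => (mfun_hasDerivAt hϑc ε u).continuousAt

lemma mfun_nonneg {ϑ : ℝ → ℝ} (hϑrange : ∀ t, 0 ≤ t → ϑ t ∈ Set.Icc (0:ℝ) 1)
    {ε : ℝ} (hε : 0 < ε) {u : ℝ} (hu : 0 ≤ u) : 0 ≤ mfun ϑ ε u :=
  intervalIntegral.integral_nonneg hu fun s hs =>
    (hϑrange _ (mul_nonneg hε.le hs.1)).1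

lemma mfun_pos {ϑ : ℝ → ℝ} (hϑc : Continuous ϑ)
    (hϑrange : ∀ t, 0 ≤ t → ϑ t ∈ Set.Icc (0:ℝ) 1)
    (hϑone : ∀ t, 0 ≤ t → t ≤ 1 → ϑ t = 1)
    {ε : ℝ} (hε : 0 < ε) {u : ℝ} (hu : 0 < u) : 0 < mfun ϑ ε u := by
  have hb := bfun_continuous hϑc ε
  set c := min u (1/ε) with hcdef
  have hc0 : 0 < c := lt_min hu (by positivity)
  have hcu : c ≤ u := min_le_left _ _
  have hsplit : mfun ϑ ε u = (∫ s in (0:ℝ)..c, bfun ϑ ε s) + ∫ s in c..u, bfun ϑ ε s :=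
    (intervalIntegral.integral_add_adjacent_intervals (hb.intervalIntegrable _ _)
      (hb.intervalIntegrable _ _)).symm
  have h1 : (∫ s in (0:ℝ)..c, bfun ϑ ε s) = c := by
    have heq : Set.EqOn (bfun ϑ ε) (fun _ => (1:ℝ)) (Set.uIcc 0 c) := by
      intro s hs
      rw [Set.uIcc_of_le hc0.le] at hs
      have hs0 : 0 ≤ s := hs.1
      have hεs : ε * s ≤ 1 := by
        have h2 : s ≤ 1/ε := le_trans hs.2 (min_le_right _ _)
        have := mul_le_mul_of_nonneg_left h2 hε.le
        calc ε * s ≤ ε * (1/ε) := this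
          _ = 1 := by field_simp
      exact hϑone _ (mul_nonneg hε.le hs0) hεs
    rw [intervalIntegral.integral_congr heq]
    simp
  have h2 : 0 ≤ ∫ s in c..u, bfun ϑ ε s :=
    intervalIntegral.integral_nonneg hcu fun s hs =>
      (hϑrange _ (mul_nonneg hε.le (le_trans hc0.le hs.1))).1
  rw [hsplit, h1]; linarith

/-- `g_ε(x,t)·t² − 2·G_ε(x,t) ≥ 0`. -/
theorem stmt5 (ϑ : ℝ → ℝ)
    (hϑsmooth : ContDiff ℝ (⊤ : ℕ∞) ϑ)
    (hϑrange : ∀ t, 0 ≤ t → ϑ t ∈ Set.Icc (0:ℝ) 1)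
    (hϑone : ∀ t, 0 ≤ t → t ≤ 1 → ϑ t = 1)
    (hϑzero : ∀ t, 2 ≤ t → ϑ t = 0)
    (hϑmono : ∀ t, 0 ≤ t → deriv ϑ t ≤ 0)
    (q ε : ℝ) (hq2 : 2 < q) (hq3 : q < 3) (hε : 0 < ε)
    (x : EuclideanSpace ℝ (Fin 3)) (t : ℝ) (ht : 0 ≤ t) :
    0 ≤ gfun ϑ q ε x t * t ^ 2 - 2 * Gfun ϑ q ε x t := by
  rcases ht.eq_or_lt with rfl | ht0
  · norm_num [Gfun]
  have hϑc : Continuous ϑ := hϑsmooth.continuous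
  have hbc : Continuous (bfun ϑ ε) := bfun_continuous hϑc ε
  have hmC : Continuous (mfun ϑ ε) := mfun_continuous hϑc ε
  have hmsqC : Continuous (fun u : ℝ => mfun ϑ ε (u ^ 2)) := hmC.comp (continuous_pow 2)
  have hq0 : q ≠ 0 := by linarith
  have hphi : 0 < phi x := by unfold phi; positivity
  -- nonnegativity of hfun
  have hh_nonneg : ∀ s : ℝ, 0 ≤ hfun ϑ q ε s := by
    intro s
    simp only [hfun]
    split
    · next hs =>
      have hm : 0 ≤ mfun ϑ ε (s ^ 2) := mfun_nonneg hϑrange hε (sq_nonneg s)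
      have h1 : 0 ≤ s ^ (q - 2) := Real.rpow_nonneg hs.le _
      have h2 : 0 ≤ (mfun ϑ ε (s ^ 2)) ^ ((3 - q) / 2) := Real.rpow_nonneg hm _
      have h3 : 0 ≤ (mfun ϑ ε (s ^ 2)) ^ ((3 - q) / 2 - 1) := Real.rpow_nonneg hm _
      have h4 : 0 ≤ bfun ϑ ε (s ^ 2) := (hϑrange _ (mul_nonneg hε.le (sq_nonneg s))).1
      have h5 : 0 ≤ s ^ q := Real.rpow_nonneg hs.le _
      have hq3' : (0:ℝ) ≤ (3 - q) / 3 := by linarith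
      have hq2' : (0:ℝ) ≤ q / 3 := by linarith
      have t1 := mul_nonneg (mul_nonneg hq2' h1) h2
      have t2 := mul_nonneg (mul_nonneg (mul_nonneg hq3' h5) h3) h4
      linarith
    · exact le_refl 0
  have hgle : ∀ s, gfun ϑ q ε x s ≤ phi x := fun s => min_le_right _ _
  have hg0 : ∀ s, 0 ≤ gfun ϑ q ε x s := fun s => le_min (hh_nonneg s) hphi.le
  -- continuity of g·id on (0,∞)
  have hgcontAt : ∀ s : ℝ, 0 < s → ContinuousAt (fun u => gfun ϑ q ε x u * u) s := by
    intro s hs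
    have hms : 0 < mfun ϑ ε (s ^ 2) := mfun_pos hϑc hϑrange hϑone hε (by positivity)
    have cE : ContinuousAt (fun u : ℝ =>
        u ^ (q - 2) + (q / 3) * u ^ (q - 2) * (mfun ϑ ε (u ^ 2)) ^ ((3 - q) / 2)
          + ((3 - q) / 3) * u ^ q * (mfun ϑ ε (u ^ 2)) ^ ((3 - q) / 2 - 1) * bfun ϑ ε (u ^ 2)) s := by
      have r1 : ContinuousAt (fun u : ℝ => u ^ (q - 2)) s :=
        Real.continuousAt_rpow_const s _ (Or.inl hs.ne')
      have r2 : ContinuousAt (fun u : ℝ => u ^ q) s :=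
        Real.continuousAt_rpow_const s _ (Or.inl hs.ne')
      have r3 : ContinuousAt (fun u : ℝ => (mfun ϑ ε (u ^ 2)) ^ ((3 - q) / 2)) s :=
        hmsqC.continuousAt.rpow_const (Or.inl hms.ne')
      have r4 : ContinuousAt (fun u : ℝ => (mfun ϑ ε (u ^ 2)) ^ ((3 - q) / 2 - 1)) s :=
        hmsqC.continuousAt.rpow_const (Or.inl hms.ne')
      have r5 : ContinuousAt (fun u : ℝ => bfun ϑ ε (u ^ 2)) s :=
        (hbc.comp (continuous_pow 2)).continuousAt
      exact (r1.add ((continuousAt_const.mul r1).mul r3)).add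
        (((continuousAt_const.mul r2).mul r4).mul r5)
    have hfc : ContinuousAt (hfun ϑ q ε) s := by
      apply cE.congr
      filter_upwards [Ioi_mem_nhds hs] with u hu
      simp only [hfun]
      exact (if_pos hu).symm
    have : ContinuousAt (fun u => gfun ϑ q ε x u) s := hfc.min continuousAt_const
    exact this.mul continuousAt_id
  have hgcontOn : ContinuousOn (fun u => gfun ϑ q ε x u * u) (Ioi 0) :=
    continuousOn_of_forall_continuousAt fun s hs => hgcontAt s hs
  -- integrability
  have hgsint : IntervalIntegrable (fun u => gfun ϑ q ε x u * u) volume 0 t := by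
    rw [intervalIntegrable_iff_integrableOn_Ioc_of_le ht]
    apply Integrable.mono' (g := fun _ => phi x * t)
      (integrableOn_const measure_Ioc_lt_top.ne)
      ((hgcontOn.mono Ioc_subset_Ioi_self).aestronglyMeasurable measurableSet_Ioc)
    filter_upwards [ae_restrict_mem measurableSet_Ioc] with s hs
    rw [Real.norm_eq_abs, abs_of_nonneg (mul_nonneg (hg0 s) hs.1.le)]
    exact mul_le_mul (hgle s) hs.2 hs.1.le hphi.le
  rcases le_total (phi x) (hfun ϑ q ε t) with hcase | hcase
  · -- case g t = phi x
    have hgt : gfun ϑ q ε x t = phi x := min_eq_right hcase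
    have hint : ∫ s in (0:ℝ)..t, phi x * s = phi x * (t ^ 2 / 2) := by
      rw [intervalIntegral.integral_const_mul, integral_id]; ring
    have hle : Gfun ϑ q ε x t ≤ phi x * (t ^ 2 / 2) := by
      rw [Gfun, ← hint]
      apply intervalIntegral.integral_mono_on ht hgsint
        ((continuous_const.mul continuous_id).intervalIntegrable _ _)
      intro s hs
      exact mul_le_mul_of_nonneg_right (hgle s) hs.1
    rw [hgt]; linarith
  · -- case g t = hfun t
    have hgt : gfun ϑ q ε x t = hfun ϑ q ε t := min_eq_left hcase
    -- derivative of H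
    have dH : ∀ s ∈ Ioo (0:ℝ) t, HasDerivAt (Hfun ϑ q ε) (hfun ϑ q ε s * s) s := by
      intro s hs
      have hs0 : 0 < s := hs.1
      have hms : 0 < mfun ϑ ε (s ^ 2) := mfun_pos hϑc hϑrange hϑone hε (by positivity)
      have d1 : HasDerivAt (fun u : ℝ => u ^ q) (q * s ^ (q - 1)) s :=
        Real.hasDerivAt_rpow_const (Or.inl hs0.ne')
      have d2 : HasDerivAt (fun u : ℝ => mfun ϑ ε (u ^ 2)) (bfun ϑ ε (s ^ 2) * (2 * s)) s := by
        have h1 := (mfun_hasDerivAt hϑc ε (s ^ 2)).comp s (hasDerivAt_pow 2 s)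
        simpa [mul_comm, Function.comp_def] using h1
      have d3 : HasDerivAt (fun u : ℝ => (mfun ϑ ε (u ^ 2)) ^ ((3 - q) / 2))
          (bfun ϑ ε (s ^ 2) * (2 * s) * ((3 - q) / 2) *
            (mfun ϑ ε (s ^ 2)) ^ ((3 - q) / 2 - 1)) s :=
        d2.rpow_const (Or.inl hms.ne')
      have dHs : HasDerivAt (Hfun ϑ q ε)
          (q * s ^ (q - 1) / q + (q * s ^ (q - 1) / 3 * (mfun ϑ ε (s ^ 2)) ^ ((3 - q) / 2)
            + s ^ q / 3 * (bfun ϑ ε (s ^ 2) * (2 * s) * ((3 - q) / 2) *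
              (mfun ϑ ε (s ^ 2)) ^ ((3 - q) / 2 - 1)))) s := by
        unfold Hfun
        exact (d1.div_const q).add ((d1.div_const 3).mul d3)
      have e1 : s ^ (q - 1) = s ^ (q - 2) * s := by
        rw [show q - 1 = (q - 2) + 1 by ring, Real.rpow_add_one hs0.ne']
      have heq : hfun ϑ q ε s * s
          = q * s ^ (q - 1) / q + (q * s ^ (q - 1) / 3 * (mfun ϑ ε (s ^ 2)) ^ ((3 - q) / 2)
            + s ^ q / 3 * (bfun ϑ ε (s ^ 2) * (2 * s) * ((3 - q) / 2) *
              (mfun ϑ ε (s ^ 2)) ^ ((3 - q) / 2 - 1))) := by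
        simp only [hfun, if_pos hs0]
        rw [e1]
        field_simp
        ring
      rw [heq]; exact dHs
    -- derivative of G
    have dG : ∀ s ∈ Ioo (0:ℝ) t, HasDerivAt (Gfun ϑ q ε x) (gfun ϑ q ε x s * s) s := by
      intro s hs
      have hsub : Set.uIcc (0:ℝ) s ⊆ Set.uIcc (0:ℝ) t :=
        uIcc_subset_uIcc left_mem_uIcc (by rw [uIcc_of_le ht]; exact ⟨hs.1.le, hs.2.le⟩)
      exact intervalIntegral.integral_hasDerivAt_right (hgsint.mono_set hsub)
        (ContinuousOn.stronglyMeasurableAtFilter isOpen_Ioi hgcontOn s hs.1)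
        (hgcontAt s hs.1)
    -- continuity of H
    have hHcont : Continuous (Hfun ϑ q ε) := by
      have c1 : Continuous fun u : ℝ => u ^ q :=
        continuous_iff_continuousAt.2 fun u =>
          Real.continuousAt_rpow_const u q (Or.inr (by linarith))
      have c2 : Continuous fun u : ℝ => (mfun ϑ ε (u ^ 2)) ^ ((3 - q) / 2) :=
        continuous_iff_continuousAt.2 fun u =>
          hmsqC.continuousAt.rpow_const (Or.inr (by linarith))
      unfold Hfun
      exact (c1.div_const q).add ((c1.div_const 3).mul c2)
    -- continuity of G on [0,t]
    have hGcont : ContinuousOn (Gfun ϑ q ε x) (Icc 0 t) := by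
      have h1 := intervalIntegral.continuousOn_primitive_interval'
        (a := 0) hgsint left_mem_uIcc
      rw [uIcc_of_le ht] at h1
      exact h1
    -- monotonicity of H - G
    have hmono : MonotoneOn (fun u => Hfun ϑ q ε u - Gfun ϑ q ε x u) (Icc 0 t) := by
      apply monotoneOn_of_deriv_nonneg (convex_Icc 0 t)
        (hHcont.continuousOn.sub hGcont)
      · intro s hs
        rw [interior_Icc] at hs
        exact ((dH s hs).sub (dG s hs)).differentiableAt.differentiableWithinAt
      · intro s hs
        rw [interior_Icc] at hs
        rw [((dH s hs).sub (dG s hs)).deriv]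
        have h1 : gfun ϑ q ε x s ≤ hfun ϑ q ε s := min_le_left _ _
        have := mul_le_mul_of_nonneg_right h1 hs.1.le
        linarith
    have hGH : Gfun ϑ q ε x t ≤ Hfun ϑ q ε t := by
      have h00 : Gfun ϑ q ε x 0 = 0 := by simp [Gfun]
      have hH0 : Hfun ϑ q ε 0 = 0 := by
        simp [Hfun, Real.zero_rpow hq0]
      have h1 := hmono (left_mem_Icc.2 ht) (right_mem_Icc.2 ht) ht
      simp only [hH0, h00] at h1
      linarith
    -- pointwise inequality 2 H t ≤ h t * t²
    have hkey : 2 * Hfun ϑ q ε t ≤ hfun ϑ q ε t * t ^ 2 := by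
      have hm : 0 ≤ mfun ϑ ε (t ^ 2) := mfun_nonneg hϑrange hε (sq_nonneg t)
      have hA : 0 ≤ (mfun ϑ ε (t ^ 2)) ^ ((3 - q) / 2) := Real.rpow_nonneg hm _
      have hB : 0 ≤ (mfun ϑ ε (t ^ 2)) ^ ((3 - q) / 2 - 1) := Real.rpow_nonneg hm _
      have hb4 : 0 ≤ bfun ϑ ε (t ^ 2) := (hϑrange _ (mul_nonneg hε.le (sq_nonneg t))).1
      have hP : 0 < t ^ q := Real.rpow_pos_of_pos ht0 q
      have e1 : t ^ (q - 2) * t ^ 2 = t ^ q := by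
        rw [← Real.rpow_natCast t 2, ← Real.rpow_add ht0]
        norm_num
      simp only [hfun, Hfun, if_pos ht0]
      set A := (mfun ϑ ε (t ^ 2)) ^ ((3 - q) / 2) with hAdef
      set B := (mfun ϑ ε (t ^ 2)) ^ ((3 - q) / 2 - 1) with hBdef
      set b := bfun ϑ ε (t ^ 2) with hbdef
      have e2 : (t ^ (q - 2) + q / 3 * t ^ (q - 2) * A + (3 - q) / 3 * t ^ q * B * b) * t ^ 2
          = t ^ q + q / 3 * t ^ q * A + (3 - q) / 3 * (t ^ q * t ^ 2) * B * b := by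
        linear_combination (1 + q / 3 * A) * e1
      rw [e2]
      have f1 : 2 * (t ^ q / q) ≤ t ^ q := by
        rw [mul_div_assoc', div_le_iff₀ (by linarith : (0:ℝ) < q)]
        nlinarith
      have f2 : 0 ≤ t ^ q * A := mul_nonneg hP.le hA
      have f3 : 0 ≤ (3 - q) / 3 * (t ^ q * t ^ 2) * B * b :=
        mul_nonneg (mul_nonneg (mul_nonneg (by linarith) (by positivity)) hB) hb4
      have f4 : 0 ≤ (q - 2) * (t ^ q * A) := mul_nonneg (by linarith) f2
      nlinarith [f1, f3, f4]
    rw [hgt]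
    linarith
end
end

section
/- For all 2<q<3, ε>0 and t>0 one has h_ε(t) ≤ (1 + (2/ε)^{(3−q)/2})·t^{q−2}. -/
noncomputable section

/-- `h_ε(t) ≤ (1 + (2/ε)^{(3−q)/2})·t^{q−2}`. -/
theorem stmt9 (ϑ : ℝ → ℝ)
    (hϑsmooth : ContDiff ℝ (⊤ : ℕ∞) ϑ)
    (hϑrange : ∀ t, 0 ≤ t → ϑ t ∈ Set.Icc (0:ℝ) 1)
    (hϑone : ∀ t, 0 ≤ t → t ≤ 1 → ϑ t = 1)
    (hϑzero : ∀ t, 2 ≤ t → ϑ t = 0)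
    (hϑmono : ∀ t, 0 ≤ t → deriv ϑ t ≤ 0)
    (q ε : ℝ) (hq2 : 2 < q) (hq3 : q < 3) (hε : 0 < ε)
    (t : ℝ) (ht : 0 < t) :
    hfun ϑ q ε t ≤ (1 + (2 / ε) ^ ((3 - q) / 2)) * t ^ (q - 2) := by
  have hT0 : (0:ℝ) < t ^ 2 := by positivity
  set T : ℝ := t ^ 2 with hTdef
  set b : ℝ → ℝ := fun s => ϑ (ε * s) with hbdef
  have hbcont : Continuous b := hϑsmooth.continuous.comp (continuous_const.mul continuous_id)
  have hbint : ∀ u v : ℝ, IntervalIntegrable b MeasureTheory.volume u v :=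
    fun u v => hbcont.intervalIntegrable u v
  have hb0 : ∀ s, 0 ≤ s → 0 ≤ b s := fun s hs => (hϑrange (ε*s) (by positivity)).1
  have hb1 : ∀ s, 0 ≤ s → b s ≤ 1 := fun s hs => (hϑrange (ε*s) (by positivity)).2
  -- ϑ is antitone on [0,∞)
  have hanti : AntitoneOn ϑ (Set.Ici (0:ℝ)) := by
    apply antitoneOn_of_deriv_nonpos (convex_Ici 0) hϑsmooth.continuous.continuousOn
    · exact fun x _ => (hϑsmooth.differentiable (by simp)).differentiableAt.differentiableWithinAt
    · intro x hx
      rw [interior_Ici] at hx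
      exact hϑmono x (le_of_lt hx)
  set m : ℝ := mfun ϑ ε T with hmdef
  have hm_eq : m = ∫ s in (0:ℝ)..T, b s := rfl
  -- lower bound : T * b T ≤ m
  have hTb : T * b T ≤ m := by
    have h1 : (∫ _ in (0:ℝ)..T, b T) ≤ ∫ s in (0:ℝ)..T, b s := by
      apply intervalIntegral.integral_mono_on hT0.le intervalIntegrable_const (hbint 0 T)
      intro s hs
      exact hanti (mul_nonneg hε.le hs.1) (mul_nonneg hε.le hT0.le)
        (mul_le_mul_of_nonneg_left hs.2 hε.le)
    rw [hm_eq]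
    simpa [smul_eq_mul, mul_comm] using h1
  -- positivity of m
  have hm_pos : 0 < m := by
    set c : ℝ := min T (1/ε) with hcdef
    have hc0 : 0 < c := lt_min hT0 (by positivity)
    have hcT : c ≤ T := min_le_left _ _
    have hsplit : m = (∫ s in (0:ℝ)..c, b s) + ∫ s in c..T, b s := by
      rw [hm_eq, intervalIntegral.integral_add_adjacent_intervals (hbint 0 c) (hbint c T)]
    have h1 : (∫ s in (0:ℝ)..c, b s) = c := by
      have : ∀ s ∈ Set.uIcc (0:ℝ) c, b s = 1 := by
        intro s hs
        rw [Set.uIcc_of_le hc0.le] at hs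
        apply hϑone
        · exact mul_nonneg hε.le hs.1
        · calc ε * s ≤ ε * (1/ε) := by
                exact mul_le_mul_of_nonneg_left (le_trans hs.2 (min_le_right _ _)) hε.le
            _ = 1 := by field_simp
      rw [intervalIntegral.integral_congr this]
      simp
    have h2 : 0 ≤ ∫ s in c..T, b s :=
      intervalIntegral.integral_nonneg hcT (fun s hs => hb0 s (le_trans hc0.le hs.1))
    rw [hsplit, h1]
    linarith
  -- upper bound : m ≤ 2/ε
  have hm_le : m ≤ 2/ε := by
    have hupto : ∀ u : ℝ, 0 ≤ u → (∫ s in (0:ℝ)..u, b s) ≤ u := by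
      intro u hu
      have h1 : (∫ s in (0:ℝ)..u, b s) ≤ ∫ _ in (0:ℝ)..u, (1:ℝ) := by
        apply intervalIntegral.integral_mono_on hu (hbint 0 u) intervalIntegrable_const
        exact fun s hs => hb1 s hs.1
      simpa using h1
    rcases le_or_gt T (2/ε) with hcase | hcase
    · exact le_trans (hm_eq ▸ hupto T hT0.le) hcase
    · have hsplit : m = (∫ s in (0:ℝ)..(2/ε), b s) + ∫ s in (2/ε)..T, b s := by
        rw [hm_eq, intervalIntegral.integral_add_adjacent_intervals (hbint 0 _) (hbint _ T)]
      have h2 : (∫ s in (2/ε)..T, b s) = 0 := by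
        have : ∀ s ∈ Set.uIcc (2/ε) T, b s = 0 := by
          intro s hs
          rw [Set.uIcc_of_le hcase.le] at hs
          apply hϑzero
          have h := hs.1
          rw [div_le_iff₀ hε] at h
          linarith
        rw [intervalIntegral.integral_congr this]
        simp
      rw [hsplit, h2, add_zero]
      exact hupto (2/ε) (by positivity)
  -- algebra
  set α : ℝ := (3 - q) / 2 with hαdef
  have hα : 0 < α := by rw [hαdef]; linarith
  have hmα_le : m ^ α ≤ (2/ε) ^ α := Real.rpow_le_rpow hm_pos.le hm_le hα.le
  have hmα1 : m ^ α = m * m ^ (α - 1) := by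
    have h1 : m ^ α = m ^ (1 + (α - 1)) := by ring_nf
    rw [h1, Real.rpow_add hm_pos, Real.rpow_one]
  have tq_eq : t ^ q = t ^ (q - 2) * T := by
    have h1 : t ^ q = t ^ (q - 2 + 2) := by norm_num
    rw [h1, Real.rpow_add ht, hTdef,
      show ((2:ℝ)) = ((2:ℕ):ℝ) by norm_num, Real.rpow_natCast]
  have hbfeq : bfun ϑ ε T = b T := rfl
  have key : T * b T * m ^ (α - 1) ≤ m ^ α := by
    rw [hmα1]
    exact mul_le_mul_of_nonneg_right hTb (Real.rpow_nonneg hm_pos.le _)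
  have hterm3 : ((3 - q) / 3) * t ^ q * m ^ (α - 1) * b T
      ≤ ((3 - q) / 3) * t ^ (q - 2) * m ^ α := by
    rw [tq_eq]
    have hrw : ((3 - q) / 3) * (t ^ (q - 2) * T) * m ^ (α - 1) * b T
        = ((3 - q) / 3) * t ^ (q - 2) * (T * b T * m ^ (α - 1)) := by ring
    rw [hrw]
    apply mul_le_mul_of_nonneg_left key
    have := Real.rpow_pos_of_pos ht (q - 2)
    nlinarith
  rw [hfun, if_pos ht]
  have htq2 : 0 < t ^ (q - 2) := Real.rpow_pos_of_pos ht (q - 2)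
  have hmα_nonneg : 0 ≤ m ^ α := Real.rpow_nonneg hm_pos.le _
  -- the goal mentions mfun ϑ ε (t^2) and bfun ϑ ε (t^2); fold everything
  show t ^ (q - 2) + q / 3 * t ^ (q - 2) * m ^ α
      + (3 - q) / 3 * t ^ q * m ^ (α - 1) * b T
      ≤ (1 + (2 / ε) ^ α) * t ^ (q - 2)
  nlinarith [mul_le_mul_of_nonneg_left hmα_le htq2.le]
end
end

section
/- For all 2<q<3, ε>0, s∈[0,1], x∈ℝ³ and t≥0, defining f(x,t)=(1−s)·h_ε(t)+s·g_ε(x,t) and F(x,t)=(1−s)·(t^q/q + (t^q/3)(m_ε(t²))^{(3−q)/2}) + s·G_ε(x,t), one has 3F(x,t) − f(x,t)·t² ≥ ((3−q)/q)·(1−s)·t^q − φ(x)·t². -/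
noncomputable section

theorem stmt15 (ϑ : ℝ → ℝ)
    (hϑsmooth : ContDiff ℝ (⊤ : ℕ∞) ϑ)
    (hϑrange : ∀ t, 0 ≤ t → ϑ t ∈ Set.Icc (0:ℝ) 1)
    (hϑone : ∀ t, 0 ≤ t → t ≤ 1 → ϑ t = 1)
    (hϑzero : ∀ t, 2 ≤ t → ϑ t = 0)
    (hϑmono : ∀ t, 0 ≤ t → deriv ϑ t ≤ 0)
    (q ε : ℝ) (hq2 : 2 < q) (hq3 : q < 3) (hε : 0 < ε)
    (s : ℝ) (hs : s ∈ Set.Icc (0:ℝ) 1)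
    (x : EuclideanSpace ℝ (Fin 3)) (t : ℝ) (ht : 0 ≤ t) :
    ((3 - q) / q) * (1 - s) * t ^ q - phi x * t ^ 2
      ≤ 3 * ((1 - s) * (t ^ q / q + (t ^ q / 3) * (mfun ϑ ε (t ^ 2)) ^ ((3 - q) / 2))
              + s * Gfun ϑ q ε x t)
        - ((1 - s) * hfun ϑ q ε t + s * gfun ϑ q ε x t) * t ^ 2 := by
  obtain ⟨hs0, hs1⟩ := hs
  have hq0 : (0:ℝ) < q := by linarith
  have hϑcont : Continuous ϑ := hϑsmooth.continuous
  have hbcont : Continuous (bfun ϑ ε) := hϑcont.comp (continuous_const.mul continuous_id)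
  have hbnn : ∀ u, 0 ≤ u → 0 ≤ bfun ϑ ε u := fun u hu =>
    (hϑrange _ (mul_nonneg hε.le hu)).1
  have hmnn : ∀ u, 0 ≤ u → 0 ≤ mfun ϑ ε u := fun u hu =>
    intervalIntegral.integral_nonneg hu (fun z hz => hbnn z hz.1)
  have hanti : AntitoneOn ϑ (Set.Ici 0) := by
    apply antitoneOn_of_deriv_nonpos (convex_Ici 0) hϑcont.continuousOn
    · intro z hz
      exact ((hϑsmooth.differentiable (by simp)) z).differentiableWithinAt
    · intro z hz
      exact hϑmono z (le_of_lt (by simpa using hz))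
  have hub : ∀ u, 0 ≤ u → u * bfun ϑ ε u ≤ mfun ϑ ε u := by
    intro u hu
    have hconst : ∫ _ in (0:ℝ)..u, bfun ϑ ε u = u * bfun ϑ ε u := by
      simp [smul_eq_mul]
    rw [← hconst]
    apply intervalIntegral.integral_mono_on hu intervalIntegrable_const
      (hbcont.intervalIntegrable _ _)
    intro z hz
    exact hanti (Set.mem_Ici.2 (mul_nonneg hε.le hz.1))
      (Set.mem_Ici.2 (mul_nonneg hε.le hu))
      (mul_le_mul_of_nonneg_left hz.2 hε.le)
  have hhnn : ∀ r : ℝ, 0 ≤ hfun ϑ q ε r := by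
    intro r
    unfold hfun
    split
    · rename_i hr
      have h1 : (0:ℝ) ≤ r ^ (q - 2) := Real.rpow_nonneg hr.le _
      have h2 : (0:ℝ) ≤ (mfun ϑ ε (r ^ 2)) ^ ((3 - q) / 2) :=
        Real.rpow_nonneg (hmnn _ (sq_nonneg r)) _
      have h3 : (0:ℝ) ≤ (mfun ϑ ε (r ^ 2)) ^ ((3 - q) / 2 - 1) :=
        Real.rpow_nonneg (hmnn _ (sq_nonneg r)) _
      have h4 : (0:ℝ) ≤ r ^ q := Real.rpow_nonneg hr.le _
      have h5 : (0:ℝ) ≤ bfun ϑ ε (r ^ 2) := hbnn _ (sq_nonneg r)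
      refine add_nonneg (add_nonneg h1 ?_) ?_
      · exact mul_nonneg (mul_nonneg (by linarith) h1) h2
      · exact mul_nonneg (mul_nonneg (mul_nonneg (by linarith) h4) h3) h5
    · exact le_rfl
  have hφ : 0 < phi x := by
    unfold phi
    positivity
  have hgnn : ∀ r : ℝ, 0 ≤ gfun ϑ q ε x r := fun r => le_min (hhnn r) hφ.le
  have hG : 0 ≤ Gfun ϑ q ε x t :=
    intervalIntegral.integral_nonneg ht (fun z hz => mul_nonneg (hgnn z) hz.1)
  -- core inequality
  have hcore : ((3 - q) / q) * t ^ q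
      ≤ 3 * (t ^ q / q + (t ^ q / 3) * (mfun ϑ ε (t ^ 2)) ^ ((3 - q) / 2))
        - hfun ϑ q ε t * t ^ 2 := by
    rcases eq_or_lt_of_le ht with h0 | hpos
    · rw [← h0]
      simp [hfun, Real.zero_rpow hq0.ne']
    · unfold hfun
      rw [if_pos hpos]
      set u : ℝ := t ^ 2 with hu_def
      set m : ℝ := mfun ϑ ε u with hm_def
      set b : ℝ := bfun ϑ ε u with hb_def
      set p : ℝ := (3 - q) / 2 with hp_def
      have hu : (0:ℝ) < u := by positivity
      have hm0 : (0:ℝ) ≤ m := hmnn u hu.le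
      have hp0 : (0:ℝ) < p := by rw [hp_def]; linarith
      have hp1 : p - 1 < 0 := by rw [hp_def]; linarith
      have hkey : m ^ (p - 1) * b * t ^ 2 ≤ m ^ p := by
        rcases hm0.eq_or_lt with hm | hm
        · rw [← hm, Real.zero_rpow hp0.ne', Real.zero_rpow hp1.ne]
          simp
        · have hmp : m ^ p = m ^ (p - 1) * m := by
            rw [← Real.rpow_add_one hm.ne' (p - 1)]
            ring_nf
          have hbu : u * b ≤ m := hub u hu.le
          rw [hmp, mul_assoc, ← hu_def]
          exact mul_le_mul_of_nonneg_left (by linarith [hbu])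
            (Real.rpow_nonneg hm0 _)
      have hA : t ^ (q - 2) * t ^ 2 = t ^ q := by
        rw [← Real.rpow_natCast t 2, ← Real.rpow_add hpos]
        norm_num
      have hqq : q * q⁻¹ = 1 := mul_inv_cancel₀ hq0.ne'
      have key2 : 3 * (t ^ q / q + (t ^ q / 3) * m ^ p)
          - (t ^ (q - 2) + (q / 3) * t ^ (q - 2) * m ^ p
              + ((3 - q) / 3) * t ^ q * m ^ (p - 1) * b) * t ^ 2
          - (3 - q) / q * t ^ q
          = (3 - q) / 3 * t ^ q * (m ^ p - m ^ (p - 1) * b * t ^ 2) := by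
        linear_combination (-(1 + q / 3 * m ^ p)) * hA + (t ^ q) * hqq
      have hfin : 0 ≤ (3 - q) / 3 * t ^ q * (m ^ p - m ^ (p - 1) * b * t ^ 2) :=
        mul_nonneg (mul_nonneg (by linarith) (Real.rpow_nonneg hpos.le _))
          (by linarith)
      simp only [← hu_def] at key2 hfin
      linarith [key2, hfin]
  have h1 : s * gfun ϑ q ε x t * t ^ 2 ≤ phi x * t ^ 2 := by
    have hg1 : s * gfun ϑ q ε x t ≤ gfun ϑ q ε x t :=
      mul_le_of_le_one_left (hgnn t) hs1
    have hg2 : gfun ϑ q ε x t ≤ phi x := min_le_right _ _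
    exact mul_le_mul_of_nonneg_right (le_trans hg1 hg2) (sq_nonneg t)
  have h2 := mul_le_mul_of_nonneg_left hcore (by linarith : (0:ℝ) ≤ 1 - s)
  have h3 : 0 ≤ s * Gfun ϑ q ε x t := mul_nonneg hs0 hG
  nlinarith [h2, h1, h3]
end
end

section
/- Let k be a positive integer and, for each n∈ℕ, let x_n∈ℝ³, σ_n>0 and y_{1,n},…,y_{k,n}∈ℝ³. Then there exist a constant C̄∈{0,5,10,…,5k} and a strictly increasing map φ:ℕ→ℕ such that for every n∈ℕ and every 1≤i≤k, the point y_{i,φ(n)} does not belong to the annulus B((C̄+5)·σ_{φ(n)}^{−1/2}, x_{φ(n)}) \ B(C̄·σ_{φ(n)}^{−1/2}, x_{φ(n)}), i.e. it is not the case that C̄·σ_{φ(n)}^{−1/2} ≤ |y_{i,φ(n)}−x_{φ(n)}| < (C̄+5)·σ_{φ(n)}^{−1/2}. -/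
/-!
For fixed `n`, the annuli `5m·σₙ^(-1/2) ≤ r < (5m+5)·σₙ^(-1/2)`, `m = 0, …, k`, are pairwise disjoint,
so the `k` distances `‖y i n - x n‖` miss at least one of these `k + 1` annuli. Some index `m` is
missed for infinitely many `n`, and these `n` form the subsequence.
-/

open Function

theorem exists_forall_notMem_of_pairwise_disjoint {ι κ α : Type*} [Fintype ι] [Fintype κ]
    (hcard : Fintype.card ι < Fintype.card κ) {A : κ → Set α} (hA : Pairwise (Disjoint on A))
    (p : ι → α) : ∃ j, ∀ i, p i ∉ A j := by
  by_contra! h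
  choose g hg using h
  have hg_inj : Injective g := fun j j' hjj' =>
    hA.eq (Set.not_disjoint_iff.2 ⟨p (g j), hg j, hjj' ▸ hg j'⟩)
  exact (Fintype.card_le_of_injective g hg_inj).not_gt hcard

theorem pairwise_disjoint_Ico_natCast_mul {α : Type*} [Ring α] [PartialOrder α]
    [IsOrderedRing α] (a : α) :
    Pairwise (Disjoint on fun n : ℕ => Set.Ico (n * a) ((n + 1) * a)) := by
  intro m n hmn
  simpa [onFun, add_mul] using
    Set.pairwise_disjoint_Ico_add_zsmul (0 : α) a (Nat.cast_injective.ne hmn : (m : ℤ) ≠ n)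

theorem exists_strictMono_forall_of_finite {κ : Type*} [Finite κ] {P : κ → ℕ → Prop}
    (h : ∀ n, ∃ j, P j n) : ∃ j, ∃ φ : ℕ → ℕ, StrictMono φ ∧ ∀ n, P j (φ n) := by
  obtain ⟨j, hj⟩ :=
    Filter.frequently_exists.mp (Filter.Eventually.of_forall (f := Filter.atTop) h).frequently
  exact ⟨j, Filter.extraction_of_frequently_atTop hj⟩

theorem stmt16_general (k : ℕ)
    (x : ℕ → EuclideanSpace ℝ (Fin 3)) (σ : ℕ → ℝ)
    (y : Fin k → ℕ → EuclideanSpace ℝ (Fin 3)) :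
    ∃ m : ℕ, m ≤ k ∧ ∃ φ : ℕ → ℕ, StrictMono φ ∧
      ∀ n : ℕ, ∀ i : Fin k,
        ¬((5 * m : ℝ) * (σ (φ n)) ^ (-(1/2) : ℝ) ≤ ‖y i (φ n) - x (φ n)‖ ∧
          ‖y i (φ n) - x (φ n)‖ < ((5 * m : ℝ) + 5) * (σ (φ n)) ^ (-(1/2) : ℝ)) := by
  have hsafe : ∀ n, ∃ m : Fin (k + 1), ∀ i, ‖y i n - x n‖ ∉
      Set.Ico (m * (5 * σ n ^ (-(1/2) : ℝ))) ((m + 1) * (5 * σ n ^ (-(1/2) : ℝ))) := fun n =>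
    exists_forall_notMem_of_pairwise_disjoint (by simp)
      ((pairwise_disjoint_Ico_natCast_mul _).comp_of_injective Fin.val_injective) _
  obtain ⟨m, φ, hφ, hm⟩ := exists_strictMono_forall_of_finite hsafe
  refine ⟨m, m.is_le, φ, hφ, fun n i => ?_⟩
  have hmn := hm n i
  rw [Set.mem_Ico] at hmn
  convert hmn using 2 <;> ring_nf

/-- uniform choice, along a subsequence, of a "safe annulus"
avoiding the `k` families of points `y_{i,n}`. -/
theorem stmt16 (k : ℕ) (hk : 0 < k)
    (x : ℕ → EuclideanSpace ℝ (Fin 3)) (σ : ℕ → ℝ) (hσ : ∀ n, 0 < σ n)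
    (y : Fin k → ℕ → EuclideanSpace ℝ (Fin 3)) :
    ∃ m : ℕ, m ≤ k ∧ ∃ φ : ℕ → ℕ, StrictMono φ ∧
      ∀ n : ℕ, ∀ i : Fin k,
        ¬((5 * m : ℝ) * (σ (φ n)) ^ (-(1/2) : ℝ) ≤ ‖y i (φ n) - x (φ n)‖ ∧
          ‖y i (φ n) - x (φ n)‖ < ((5 * m : ℝ) + 5) * (σ (φ n)) ^ (-(1/2) : ℝ)) :=
  stmt16_general k x σ y
end
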